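/- Let O, q, O' be as in the ALC^sym-to-ALC^abs[ca] construction, and let J be a model of O'. Define the interpretation I by: Δ^I = (E⁰ ⊔ E¹)^{J_L}; s^I = {(d,d) | d ∈ Δ^I} ∪ {(d,d') | d, d' ∈ Δ^I and there is e ∈ Δ^{J_L} with (e,d) ∈ r^{J_L} and (e,d') ∈ r^{J_L}}; A^I = A^{J_L} ∩ Δ^I for all concept names A ∈ sig(O). Then for every element d ∈ (E⁰ ⊔ E¹)^{J_L} and every ALC^sym concept C ∈ cl(O): d ∈ (A_C)^{J_L} if and only if d ∈ C^I. -/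

import Mathlib

set_option maxHeartbeats 1000000

namespace DLAbs

/-! # Basic syntax of description logics with abstraction and refinement

Concept names, role names, variables and abstraction levels are represented
by natural numbers. -/

/-- A role: a role name or an inverse role. -/
inductive Role where
  | name (r : ℕ)
  | inv  (r : ℕ)
deriving DecidableEq

/-- `R⁻`, with `(r⁻)⁻ = r`. -/
def Role.flip : Role → Role
  | .name r => .inv r
  | .inv r  => .name r

/-- The underlying role name of a role. -/
def Role.base : Role → ℕ
  | .name r => r
  | .inv r  => r

/-- A role is a plain role name (no inverse). -/
def Role.IsName : Role → Prop
  | .name _ => True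
  | .inv _  => False

/-- ALCI-concepts. -/
inductive Concept where
  | atom (A : ℕ)
  | neg  (C : Concept)
  | conj (C D : Concept)
  | disj (C D : Concept)
  | ex   (R : Role) (C : Concept)
  | all  (R : Role) (C : Concept)
deriving DecidableEq

/-- `⊤` is an abbreviation for `A ⊔ ¬A` with `A` a fixed concept name. -/
def Concept.top : Concept := .disj (.atom 0) (.neg (.atom 0))

/-- `⊥` is an abbreviation for `¬⊤`. -/
def Concept.bot : Concept := .neg Concept.top

/-- ALC-concepts: no inverse roles. -/
def Concept.IsALC : Concept → Prop
  | .atom _ => True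
  | .neg C => C.IsALC
  | .conj C D => C.IsALC ∧ D.IsALC
  | .disj C D => C.IsALC ∧ D.IsALC
  | .ex R C => R.IsName ∧ C.IsALC
  | .all R C => R.IsName ∧ C.IsALC

/-- EL-concepts: only concept names, `⊓` and `∃r.C` (no inverse roles). -/
def Concept.IsEL : Concept → Prop
  | .atom _ => True
  | .neg _ => False
  | .conj C D => C.IsEL ∧ D.IsEL
  | .disj _ _ => False
  | .ex R C => R.IsName ∧ C.IsEL
  | .all _ _ => False

/-- Concept names occurring in a concept. -/
def Concept.cnames : Concept → List ℕ
  | .atom A => [A]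
  | .neg C => C.cnames
  | .conj C D => C.cnames ++ D.cnames
  | .disj C D => C.cnames ++ D.cnames
  | .ex _ C => C.cnames
  | .all _ C => C.cnames

/-- Role names occurring in a concept. -/
def Concept.rnames : Concept → List ℕ
  | .atom _ => []
  | .neg C => C.rnames
  | .conj C D => C.rnames ++ D.rnames
  | .disj C D => C.rnames ++ D.rnames
  | .ex R C => R.base :: C.rnames
  | .all R C => R.base :: C.rnames

/-- Size of a concept. -/
def Concept.size : Concept → ℕ
  | .atom _ => 1
  | .neg C => C.size + 1
  | .conj C D => C.size + D.size + 1
  | .disj C D => C.size + D.size + 1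
  | .ex _ C => C.size + 2
  | .all _ C => C.size + 2

/-- An interpretation with domain contained in the carrier type `α`.
(Nonemptiness of the domain is required separately where appropriate.) -/
structure Interp (α : Type) where
  dom : Set α
  cname : ℕ → Set α
  rname : ℕ → Set (α × α)
  cname_sub : ∀ A, cname A ⊆ dom
  rname_sub : ∀ r p, p ∈ rname r → p.1 ∈ dom ∧ p.2 ∈ dom

/-- Interpretation of a (possibly inverse) role. -/
def Interp.role {α} (I : Interp α) : Role → Set (α × α)
  | .name r => I.rname r
  | .inv r  => {p | (p.2, p.1) ∈ I.rname r}

/-- Semantics of concepts. -/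
def Interp.sem {α} (I : Interp α) : Concept → Set α
  | .atom A => I.cname A
  | .neg C => I.dom \ I.sem C
  | .conj C D => I.sem C ∩ I.sem D
  | .disj C D => I.sem C ∪ I.sem D
  | .ex R C => {d | d ∈ I.dom ∧ ∃ e, (d, e) ∈ I.role R ∧ e ∈ I.sem C}
  | .all R C => {d | d ∈ I.dom ∧ ∀ e, (d, e) ∈ I.role R → e ∈ I.sem C}

/-- A conjunctive query: concept atoms `C(x)`, role atoms `r(x,y)` (`r` a role
name), and a tuple of answer variables.  Variables not occurring in `ans` are
existentially quantified. -/
structure CQ where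
  cas : List (Concept × ℕ)
  ras : List (ℕ × ℕ × ℕ)
  ans : List ℕ
deriving DecidableEq

/-- The variables occurring in atoms of a CQ. -/
def CQ.atomVars (q : CQ) : List ℕ :=
  q.cas.map Prod.snd ++ q.ras.flatMap (fun p => [p.2.1, p.2.2])

/-- All variables of a CQ. -/
def CQ.vars (q : CQ) : List ℕ := q.ans ++ q.atomVars

/-- A CQ is full if it has no quantified variables. -/
def CQ.Full (q : CQ) : Prop := (∀ v ∈ q.atomVars, v ∈ q.ans) ∧ q.ans.Nodup

/-- The undirected edge relation on variables induced by the role atoms. -/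
def CQ.edge (q : CQ) (a b : ℕ) : Prop :=
  ∃ p ∈ q.ras, (p.2.1 = a ∧ p.2.2 = b) ∨ (p.2.1 = b ∧ p.2.2 = a)

/-- A CQ is connected. -/
def CQ.Connected (q : CQ) : Prop :=
  ∀ u ∈ q.vars, ∀ v ∈ q.vars, Relation.ReflTransGen q.edge u v

/-- `h` is a homomorphism from `q` to `I`. -/
def CQ.Hom {α} (q : CQ) (I : Interp α) (h : ℕ → α) : Prop :=
  (∀ v ∈ q.vars, h v ∈ I.dom) ∧
  (∀ p ∈ q.cas, h p.2 ∈ I.sem p.1) ∧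
  (∀ p ∈ q.ras, (h p.2.1, h p.2.2) ∈ I.rname p.1)

/-- The answers `q(I)` to `q` on `I`, as tuples (lists) indexed by `q.ans`. -/
def CQ.answers {α} (q : CQ) (I : Interp α) : Set (List α) :=
  {t | ∃ h, q.Hom I h ∧ t = q.ans.map h}

def CQ.cnames (q : CQ) : List ℕ := q.cas.flatMap (fun p => p.1.cnames)

def CQ.rnames (q : CQ) : List ℕ :=
  q.cas.flatMap (fun p => p.1.rnames) ++ q.ras.map (fun p => p.1)

def CQ.size (q : CQ) : ℕ :=
  (q.cas.map (fun p => p.1.size + 1)).sum + 3 * q.ras.length + q.ans.length + 1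

/-- Statements of abstraction DLs.
* `ci L C D`: the labeled concept inclusion `C ⊑_L D`;
* `ri L R S`: the labeled role inclusion `R ⊑_L S`;
* `cref L q L' C`: the concept refinement `L:q(x̄) refines L':C`;
* `cabs L' C L q`: the concept abstraction `L':C abstracts L:q(x̄)`;
* `rref L q nx L' C1 R C2`: the role refinement
  `L:q(x̄,ȳ) refines L':(C1(x) ∧ R(x,y) ∧ C2(y))`, where `x̄` consists of the
  first `nx` answer variables of `q` and `ȳ` of the remaining ones;
* `rabs L' R L q nx`: the role abstraction `L':R abstracts L:q(x̄,ȳ)`, with the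
  same convention for the split of the answer variables. -/
inductive Stmt where
  | ci   (L : ℕ) (C D : Concept)
  | ri   (L : ℕ) (R S : Role)
  | cref (L : ℕ) (q : CQ) (L' : ℕ) (C : Concept)
  | cabs (L' : ℕ) (C : Concept) (L : ℕ) (q : CQ)
  | rref (L : ℕ) (q : CQ) (nx : ℕ) (L' : ℕ) (C1 : Concept) (R : Role) (C2 : Concept)
  | rabs (L' : ℕ) (R : Role) (L : ℕ) (q : CQ) (nx : ℕ)
deriving DecidableEq

/-- Syntactic side conditions on the CQs in a statement: CQs in refinement and
abstraction statements are full, CQs in abstraction statements are moreover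
connected, and in role refinements/abstractions both tuples are nonempty. -/
def Stmt.WfCQ : Stmt → Prop
  | .ci _ _ _ => True
  | .ri _ _ _ => True
  | .cref _ q _ _ => q.Full
  | .cabs _ _ _ q => q.Full ∧ q.Connected
  | .rref _ q nx _ _ _ _ => q.Full ∧ 0 < nx ∧ nx < q.ans.length
  | .rabs _ _ _ q nx => q.Full ∧ q.Connected ∧ 0 < nx ∧ nx < q.ans.length

def Stmt.lvls : Stmt → List ℕ
  | .ci L _ _ => [L]
  | .ri L _ _ => [L]
  | .cref L _ L' _ => [L, L']
  | .cabs L' _ L _ => [L, L']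
  | .rref L _ _ L' _ _ _ => [L, L']
  | .rabs L' _ L _ _ => [L, L']

def Stmt.cnames : Stmt → List ℕ
  | .ci _ C D => C.cnames ++ D.cnames
  | .ri _ _ _ => []
  | .cref _ q _ C => q.cnames ++ C.cnames
  | .cabs _ C _ q => q.cnames ++ C.cnames
  | .rref _ q _ _ C1 _ C2 => q.cnames ++ C1.cnames ++ C2.cnames
  | .rabs _ _ _ q _ => q.cnames

def Stmt.rnames : Stmt → List ℕ
  | .ci _ C D => C.rnames ++ D.rnames
  | .ri _ R S => [R.base, S.base]
  | .cref _ q _ C => q.rnames ++ C.rnames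
  | .cabs _ C _ q => q.rnames ++ C.rnames
  | .rref _ q _ _ C1 R C2 => q.rnames ++ C1.rnames ++ C2.rnames ++ [R.base]
  | .rabs _ R _ q _ => q.rnames ++ [R.base]

def Stmt.size : Stmt → ℕ
  | .ci _ C D => C.size + D.size + 2
  | .ri _ _ _ => 4
  | .cref _ q _ C => q.size + C.size + 2
  | .cabs _ C _ q => q.size + C.size + 2
  | .rref _ q _ _ C1 _ C2 => q.size + C1.size + C2.size + 6
  | .rabs _ _ _ q _ => q.size + 6

/-- The abstraction levels occurring in an ontology. -/
def ontLvls (O : List Stmt) : List ℕ := O.flatMap Stmt.lvls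

/-- The concept names occurring in an ontology. -/
def ontCnames (O : List Stmt) : List ℕ := O.flatMap Stmt.cnames

/-- The role names occurring in an ontology. -/
def ontRnames (O : List Stmt) : List ℕ := O.flatMap Stmt.rnames

/-- The size `‖O‖` of an ontology. -/
def ontSize (O : List Stmt) : ℕ := (O.map Stmt.size).sum + 1

/-- An A-interpretation: a set of abstraction levels, a relation `≺` on them,
one interpretation per level, and a partial refinement function `ρ`.  The
structural requirements are collected in `AInterp.Wf`, `AInterp.IsValid` and
`AInterp.IsValidDAG` below. -/
structure AInterp (α : Type) where
  levels : Set ℕ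
  prec : ℕ → ℕ → Prop
  interp : ℕ → Interp α
  rho : α → ℕ → Option (List α)

/-- The directed graph `(V, E)` is a tree. -/
def IsTreeGraph (V : Set ℕ) (E : ℕ → ℕ → Prop) : Prop :=
  ∃ root ∈ V, (∀ u, ¬ E u root) ∧
    (∀ v ∈ V, v ≠ root → ∃! u, u ∈ V ∧ E u v) ∧
    (∀ v ∈ V, Relation.ReflTransGen (fun a b => a ∈ V ∧ b ∈ V ∧ E a b) root v)

/-- The directed graph `(V, E)` is a DAG. -/
def IsDAGGraph (V : Set ℕ) (E : ℕ → ℕ → Prop) : Prop :=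
  (∀ a b, E a b → a ∈ V ∧ b ∈ V) ∧ (∀ v, ¬ Relation.TransGen E v v)

/-- Structural conditions on A-interpretations (without the condition on the
shape of the level graph): levels carry nonempty pairwise disjoint domains,
`≺` relates only levels of the interpretation, and the refinement function
assigns to `(d, L)` with `L ≺ L(d)` nonempty tuples over `Δ^{I_L}` such that
every element participates in at most one ensemble of its own level. -/
def AInterp.Wf {α} (I : AInterp α) : Prop :=
  (∀ L ∈ I.levels, (I.interp L).dom.Nonempty) ∧
  (∀ L, L ∉ I.levels → (I.interp L).dom = ∅) ∧
  (∀ L L', L ≠ L' → ∀ d, d ∈ (I.interp L).dom → d ∉ (I.interp L').dom) ∧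
  (∀ L L', I.prec L L' → L ∈ I.levels ∧ L' ∈ I.levels) ∧
  (∀ d L t, I.rho d L = some t →
      t ≠ [] ∧ (∀ e ∈ t, e ∈ (I.interp L).dom) ∧
      ∃ L', d ∈ (I.interp L').dom ∧ I.prec L L') ∧
  (∀ L d d' t t', I.rho d L = some t → I.rho d' L = some t' →
      ∀ e, e ∈ t → e ∈ t' → d = d')

/-- A valid A-interpretation: the level graph `(A_I, {(L',L) | L ≺ L'})` is a
tree. -/
def AInterp.IsValid {α} (I : AInterp α) : Prop :=
  I.Wf ∧ IsTreeGraph I.levels (fun a b => I.prec b a)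

/-- A-interpretations under the DAG semantics: the level graph is only
required to be a directed acyclic graph. -/
def AInterp.IsValidDAG {α} (I : AInterp α) : Prop :=
  I.Wf ∧ IsDAGGraph I.levels (fun a b => I.prec b a)

/-- The repetition-free semantics: every ensemble is a repetition-free
tuple. -/
def AInterp.RepFree {α} (I : AInterp α) : Prop :=
  ∀ d L t, I.rho d L = some t → t.Nodup

/-- Satisfaction of statements in an A-interpretation. -/
def AInterp.sat {α} (I : AInterp α) : Stmt → Prop
  | .ci L C D => L ∈ I.levels ∧ (I.interp L).sem C ⊆ (I.interp L).sem D
  | .ri L R S => L ∈ I.levels ∧ (I.interp L).role R ⊆ (I.interp L).role S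
  | .cref L q L' C => I.prec L L' ∧
      ∀ d ∈ (I.interp L').sem C, ∃ t ∈ q.answers (I.interp L), I.rho d L = some t
  | .cabs L' C L q => I.prec L L' ∧
      ∀ t ∈ q.answers (I.interp L), ∃ d ∈ (I.interp L').sem C, I.rho d L = some t
  | .rref L q nx L' C1 R C2 => I.prec L L' ∧
      ∀ d1 d2, d1 ∈ (I.interp L').sem C1 → d2 ∈ (I.interp L').sem C2 →
        (d1, d2) ∈ (I.interp L').role R →
        ∃ h, q.Hom (I.interp L) h ∧
          I.rho d1 L = some ((q.ans.take nx).map h) ∧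
          I.rho d2 L = some ((q.ans.drop nx).map h)
  | .rabs L' R L q nx => I.prec L L' ∧
      ∀ h, q.Hom (I.interp L) h →
        ∃ d1 d2, (d1, d2) ∈ (I.interp L').role R ∧
          I.rho d1 L = some ((q.ans.take nx).map h) ∧
          I.rho d2 L = some ((q.ans.drop nx).map h)

/-- `C` is `L`-satisfiable w.r.t. the ontology `O` (given as a set of
statements). -/
def SatSet (O : Set Stmt) (C : Concept) (L : ℕ) : Prop :=
  ∃ (α : Type) (I : AInterp α), I.IsValid ∧ (∀ s ∈ O, I.sat s) ∧
    ((I.interp L).sem C).Nonempty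

/-- `L`-satisfiability under the repetition-free semantics. -/
def SatSetRF (O : Set Stmt) (C : Concept) (L : ℕ) : Prop :=
  ∃ (α : Type) (I : AInterp α), I.IsValid ∧ I.RepFree ∧ (∀ s ∈ O, I.sat s) ∧
    ((I.interp L).sem C).Nonempty

/-- `L`-satisfiability under the DAG semantics. -/
def SatSetDAG (O : Set Stmt) (C : Concept) (L : ℕ) : Prop :=
  ∃ (α : Type) (I : AInterp α), I.IsValidDAG ∧ (∀ s ∈ O, I.sat s) ∧
    ((I.interp L).sem C).Nonempty

def SatList (O : List Stmt) (C : Concept) (L : ℕ) : Prop :=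
  SatSet {s | s ∈ O} C L

def SatListRF (O : List Stmt) (C : Concept) (L : ℕ) : Prop :=
  SatSetRF {s | s ∈ O} C L

def SatListDAG (O : List Stmt) (C : Concept) (L : ℕ) : Prop :=
  SatSetDAG {s | s ∈ O} C L

/-! ## Ordinary (one-level) ontologies -/

/-- An ordinary ontology is a finite list of concept inclusions `C ⊑ D`. -/
def Interp.IsPlainModel {α} (I : Interp α) (O : List (Concept × Concept)) : Prop :=
  I.dom.Nonempty ∧ ∀ p ∈ O, I.sem p.1 ⊆ I.sem p.2

/-- `O, A ⊨ q`: every model of `O` in which the concept name `A` is nonempty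
satisfies the Boolean CQ `q`. -/
def EntailsCQ (O : List (Concept × Concept)) (A : ℕ) (q : CQ) : Prop :=
  ∀ (α : Type) (I : Interp α), I.IsPlainModel O → (I.cname A).Nonempty →
    ∃ h, q.Hom I h

def plainCnames (O : List (Concept × Concept)) : List ℕ :=
  O.flatMap (fun p => p.1.cnames ++ p.2.cnames)

def plainRnames (O : List (Concept × Concept)) : List ℕ :=
  O.flatMap (fun p => p.1.rnames ++ p.2.rnames)

def bigConj (l : List Concept) : Concept := l.foldr Concept.conj Concept.top

def bigDisj (l : List Concept) : Concept := l.foldr Concept.disj Concept.bot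

/-! ## A fixed effective encoding of inputs as natural numbers -/

def natListEnc : List ℕ → ℕ
  | [] => 0
  | a :: l => Nat.pair a (natListEnc l) + 1

def Role.enc : Role → ℕ
  | .name r => 2 * r
  | .inv r  => 2 * r + 1

def Concept.enc : Concept → ℕ
  | .atom A => Nat.pair 0 A + 1
  | .neg C => Nat.pair 1 C.enc + 1
  | .conj C D => Nat.pair 2 (Nat.pair C.enc D.enc) + 1
  | .disj C D => Nat.pair 3 (Nat.pair C.enc D.enc) + 1
  | .ex R C => Nat.pair 4 (Nat.pair R.enc C.enc) + 1
  | .all R C => Nat.pair 5 (Nat.pair R.enc C.enc) + 1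

def CQ.enc (q : CQ) : ℕ :=
  Nat.pair (natListEnc (q.cas.map fun p => Nat.pair p.1.enc p.2))
    (Nat.pair (natListEnc (q.ras.map fun p => Nat.pair p.1 (Nat.pair p.2.1 p.2.2)))
      (natListEnc q.ans))

def Stmt.enc : Stmt → ℕ
  | .ci L C D => Nat.pair 0 (Nat.pair L (Nat.pair C.enc D.enc))
  | .ri L R S => Nat.pair 1 (Nat.pair L (Nat.pair R.enc S.enc))
  | .cref L q L' C => Nat.pair 2 (Nat.pair L (Nat.pair q.enc (Nat.pair L' C.enc)))
  | .cabs L' C L q => Nat.pair 3 (Nat.pair L' (Nat.pair C.enc (Nat.pair L q.enc)))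
  | .rref L q nx L' C1 R C2 =>
      Nat.pair 4 (Nat.pair L (Nat.pair q.enc (Nat.pair nx
        (Nat.pair L' (Nat.pair C1.enc (Nat.pair R.enc C2.enc))))))
  | .rabs L' R L q nx =>
      Nat.pair 5 (Nat.pair L' (Nat.pair R.enc (Nat.pair L (Nat.pair q.enc nx))))

/-- The fixed effective encoding of an input (ontology, concept, level). -/
def encodeInput (O : List Stmt) (C : Concept) (L : ℕ) : ℕ :=
  Nat.pair (natListEnc (O.map Stmt.enc)) (Nat.pair C.enc L)

/-! ## The reduction from `ALC^sym` to `ALC^abs[ca]` -/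

/-- A concept is in negation normal form. -/
def Concept.IsNNF : Concept → Prop
  | .atom _ => True
  | .neg C => ∃ A, C = Concept.atom A
  | .conj C D => C.IsNNF ∧ D.IsNNF
  | .disj C D => C.IsNNF ∧ D.IsNNF
  | .ex _ C => C.IsNNF
  | .all _ C => C.IsNNF

/-- `C̄`: the NNF of `¬C`, for `C` in NNF. -/
def nnfNeg : Concept → Concept
  | .atom A => .neg (.atom A)
  | .neg C => C
  | .conj C D => .disj (nnfNeg C) (nnfNeg D)
  | .disj C D => .conj (nnfNeg C) (nnfNeg D)
  | .ex R C => .all R (nnfNeg C)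
  | .all R C => .ex R (nnfNeg C)

/-- The direct subconcepts of a concept. -/
def dirSub : Concept → List Concept
  | .atom _ => []
  | .neg C => [C]
  | .conj C D => [C, D]
  | .disj C D => [C, D]
  | .ex _ C => [C]
  | .all _ C => [C]

/-- `S` contains all concepts of `O` and `q` and is closed under direct
subconcepts and under `C ↦ C̄`. -/
def ClosedFor (O : List (Concept × Concept)) (q : CQ) (S : Set Concept) : Prop :=
  (∀ p ∈ O, p.1 ∈ S ∧ p.2 ∈ S) ∧ (∀ p ∈ q.cas, p.1 ∈ S) ∧
  (∀ C ∈ S, nnfNeg C ∈ S) ∧ (∀ C ∈ S, ∀ C' ∈ dirSub C, C' ∈ S)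

/-- `cl` enumerates exactly the closure `cl(O)`: it is closed and contained in
every closed set. -/
def IsClosure (O : List (Concept × Concept)) (q : CQ) (cl : List Concept) : Prop :=
  ClosedFor O q {C | C ∈ cl} ∧
  ∀ S : Set Concept, ClosedFor O q S → ∀ C ∈ cl, C ∈ S

/-- `exl` enumerates (without repetition) the concepts `C` with
`∃s.C ∈ cl(O)`. -/
def IsExList (cl exl : List Concept) : Prop :=
  (∀ C, Concept.ex (Role.name 0) C ∈ cl ↔ C ∈ exl) ∧ exl.Nodup

/-- The concept names used in `O` and `q`. -/
def usedCN (O : List (Concept × Concept)) (q : CQ) : List ℕ :=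
  plainCnames O ++ q.cnames

/-- A number strictly larger than every concept name used in `O` and `q`;
fresh concept names are chosen above this bound. -/
def freshBase (O : List (Concept × Concept)) (q : CQ) : ℕ :=
  (usedCN O q).foldr max 0 + 1

/-- The fresh concept name `A_C` for `C ∈ cl(O)`. -/
def symAC (O : List (Concept × Concept)) (q : CQ) (C : Concept) : ℕ :=
  freshBase O q + Nat.pair 0 C.enc

/-- The fresh concept names `E⁰` and `E¹`. -/
def symE (O : List (Concept × Concept)) (q : CQ) (i : ℕ) : ℕ :=
  freshBase O q + Nat.pair 1 i

/-- The fresh concept names `N^i_j`. -/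
def symN (O : List (Concept × Concept)) (q : CQ) (i j : ℕ) : ℕ :=
  freshBase O q + Nat.pair 2 (Nat.pair i j)

/-- The fresh concept names `M^{i,j}_k`. -/
def symM (O : List (Concept × Concept)) (q : CQ) (i j k : ℕ) : ℕ :=
  freshBase O q + Nat.pair 3 (Nat.pair i (Nat.pair j k))

/-- The role names: `s` is the role name `0` of `ALC^sym`; `r`, `r̂`, `u` are
the fresh role names `1`, `2`, `3`. -/
def symR : ℕ := 1
def symRhat : ℕ := 2
def symRu : ℕ := 3

/-- `C → D` as an abbreviation for `¬C ⊔ D`. -/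
def implC (C D : Concept) : Concept := .disj (.neg C) D

/-- The CQ of the concept abstraction (13) for the indices `i, j`. -/
def symCQ13 (O : List (Concept × Concept)) (q : CQ) (i j : ℕ) : CQ :=
  ⟨(Concept.atom (symN O q i j), 0) ::
     (List.range j).map (fun k => (Concept.atom (symM O q i j (k + 1)), k + 1)),
   (List.range j).map (fun k => (symRhat, 0, k + 1)),
   List.range (j + 1)⟩

/-- The CQ of the concept abstraction (14) for the indices `i, j, k`. -/
def symCQ14 (O : List (Concept × Concept)) (q : CQ) (i j k : ℕ) : CQ :=
  ⟨(Concept.atom (symE O q i), 0) ::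
     (List.range j).map (fun l => (Concept.atom (symM O q i j (l + 1)), l + 1)),
   (symR, k, 0) :: (List.range (j - 1)).map (fun l => (symRu, l + 1, l + 2)),
   List.range (j + 1)⟩

/-- `q̂`: obtained from `q` by replacing each concept atom `C(x)` with
`A_C(x)`, adding `(E⁰ ⊔ E¹)(x)` for every variable `x` of `q`, and replacing
each role atom `s(x,y)` with `r(z,x) ∧ r(z,y)` for a fresh variable `z`, all
variables being answer variables. -/
def symQhat (O : List (Concept × Concept)) (q : CQ) : CQ :=
  ⟨q.cas.map (fun p => (Concept.atom (symAC O q p.1), p.2)) ++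
     q.atomVars.dedup.map (fun x =>
       (Concept.disj (Concept.atom (symE O q 0)) (Concept.atom (symE O q 1)), x)),
   (q.ras.zipIdx.map Prod.swap).flatMap (fun p =>
     [(symR, q.vars.foldr max 0 + 1 + p.1, p.2.2.1),
      (symR, q.vars.foldr max 0 + 1 + p.1, p.2.2.2)]),
   q.atomVars.dedup ++
     (List.range q.ras.length).map (fun i => q.vars.foldr max 0 + 1 + i)⟩

/-- The `ALC^abs[ca]`-ontology `O'` over levels `L ≺ L'` constructed from the
`ALC^sym` ontology `O` and the Boolean CQ `q` (items (1)–(15)). -/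
def symOnt (O : List (Concept × Concept)) (q : CQ) (cl exl : List Concept)
    (L L' : ℕ) : List Stmt :=
  let aC := symAC O q
  let e := symE O q
  let nN := symN O q
  let mM := symM O q
  let n := exl.length
  -- (1): A_B ≡_L B for concept names B ∈ cl(O)
  (cl.flatMap fun C => match C with
    | .atom B => [Stmt.ci L (.atom (aC (.atom B))) (.atom B),
                  Stmt.ci L (.atom B) (.atom (aC (.atom B)))]
    | _ => []) ++
  -- (2): A_{C̄} ≡_L ¬A_C
  (cl.flatMap fun C =>
    [Stmt.ci L (.atom (aC (nnfNeg C))) (.neg (.atom (aC C))),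
     Stmt.ci L (.neg (.atom (aC C))) (.atom (aC (nnfNeg C)))]) ++
  -- (3), (4): A_{C⊓D} ≡_L A_C ⊓ A_D and A_{C⊔D} ≡_L A_C ⊔ A_D
  (cl.flatMap fun C => match C with
    | .conj C1 C2 =>
        [Stmt.ci L (.atom (aC (.conj C1 C2))) (.conj (.atom (aC C1)) (.atom (aC C2))),
         Stmt.ci L (.conj (.atom (aC C1)) (.atom (aC C2))) (.atom (aC (.conj C1 C2)))]
    | .disj C1 C2 =>
        [Stmt.ci L (.atom (aC (.disj C1 C2))) (.disj (.atom (aC C1)) (.atom (aC C2))),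
         Stmt.ci L (.disj (.atom (aC C1)) (.atom (aC C2))) (.atom (aC (.disj C1 C2)))]
    | _ => []) ++
  -- (5): A_C ⊑_L A_D for all C ⊑ D ∈ O
  (O.map fun p => Stmt.ci L (.atom (aC p.1)) (.atom (aC p.2))) ++
  -- (6): E^i ⊑_L N^i_0 ⊔ … ⊔ N^i_n
  ([0, 1].map fun i => Stmt.ci L (.atom (e i))
    (bigDisj ((List.range (n + 1)).map fun j => Concept.atom (nN i j)))) ++
  -- (7): N^i_j ⊑_L ⨅_{1≤k≤j} ∃r̂.M^{i,j}_k
  ([0, 1].flatMap fun i => (List.range (n + 1)).map fun j =>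
    Stmt.ci L (.atom (nN i j))
      (bigConj ((List.range j).map fun k =>
        Concept.ex (Role.name symRhat) (Concept.atom (mM i j (k + 1)))))) ++
  -- (8): M^{i,j}_k ⊑_L ∃r.E⁰ ⊓ ∃r.E¹
  ([0, 1].flatMap fun i => (List.range (n + 1)).flatMap fun j =>
    (List.range j).map fun k =>
      Stmt.ci L (.atom (mM i j (k + 1)))
        (.conj (.ex (Role.name symR) (.atom (e 0)))
               (.ex (Role.name symR) (.atom (e 1))))) ++
  -- (9): A_{∃s.C} ⊓ N^i_j ⊑_L A_C ⊔ ⨆_{1≤k≤j} ∀r̂.(M^{i,j}_k → ∀r.(E^{1−i} → A_C))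
  (cl.flatMap fun C => match C with
    | .ex R C' =>
        if R = Role.name 0 then
          [0, 1].flatMap fun i => (List.range (n + 1)).map fun j =>
            Stmt.ci L (.conj (.atom (aC (.ex R C'))) (.atom (nN i j)))
              (.disj (.atom (aC C'))
                (bigDisj ((List.range j).map fun k =>
                  Concept.all (Role.name symRhat)
                    (implC (.atom (mM i j (k + 1)))
                      (Concept.all (Role.name symR)
                        (implC (.atom (e (1 - i))) (.atom (aC C'))))))))
        else []
    | _ => []) ++
  -- (10), (11): A_{∀s.C} ⊑_L A_C and ∃r.A_{∀s.C} ⊑_L ∀r.A_C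
  (cl.flatMap fun C => match C with
    | .all R C' =>
        if R = Role.name 0 then
          [Stmt.ci L (.atom (aC (.all R C'))) (.atom (aC C')),
           Stmt.ci L (.ex (Role.name symR) (.atom (aC (.all R C'))))
             (.all (Role.name symR) (.atom (aC C')))]
        else []
    | _ => []) ++
  -- (12): M^{i,j}_k ⊑_L ∃u.M^{i,j}_{k+1} for k < j
  ([0, 1].flatMap fun i => (List.range (n + 1)).flatMap fun j =>
    (List.range (j - 1)).map fun k =>
      Stmt.ci L (.atom (mM i j (k + 1)))
        (.ex (Role.name symRu) (.atom (mM i j (k + 2))))) ++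
  -- (13)
  ([0, 1].flatMap fun i => (List.range n).map fun j' =>
    Stmt.cabs L' Concept.top L (symCQ13 O q i (j' + 1))) ++
  -- (14)
  ([0, 1].flatMap fun i => (List.range n).flatMap fun j' =>
    (List.range (j' + 1)).map fun k' =>
      Stmt.cabs L' Concept.top L (symCQ14 O q i (j' + 1) (k' + 1))) ++
  -- (15)
  [Stmt.cabs L' Concept.bot L (symQhat O q)]

/-- Interpretations of `ALC^sym`: the role name `s = 0` is interpreted as a
reflexive and symmetric relation. -/
def Interp.IsSymModel {α} (I : Interp α) (O : List (Concept × Concept)) : Prop :=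
  I.IsPlainModel O ∧ (∀ d ∈ I.dom, (d, d) ∈ I.rname 0) ∧
  (∀ p ∈ I.rname 0, (p.2, p.1) ∈ I.rname 0)

/-- `O, A ⊨ q` for `ALC^sym` ontologies. -/
def EntailsCQSym (O : List (Concept × Concept)) (A : ℕ) (q : CQ) : Prop :=
  ∀ (α : Type) (I : Interp α), I.IsSymModel O → (I.cname A).Nonempty →
    ∃ h, q.Hom I h

/-- Syntactic conditions: `O` is an `ALC^sym` ontology in NNF over the single
role name `s = 0`, and `q` is a Boolean CQ over `O`'s signature and `s`. -/
def SymWf (O : List (Concept × Concept)) (q : CQ) : Prop :=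
  (∀ p ∈ O, p.1.IsALC ∧ p.2.IsALC ∧ p.1.IsNNF ∧ p.2.IsNNF) ∧
  (∀ rn ∈ plainRnames O, rn = 0) ∧
  q.ans = [] ∧ (∀ rn ∈ q.rnames, rn = 0) ∧
  (∀ p ∈ q.cas, p.1.IsALC ∧ p.1.IsNNF)

/-! ### Auxiliary lemmas for the truth lemma -/

/-- A negation-invariant size measure on concepts. -/
def msize : Concept → ℕ
  | .atom _ => 1
  | .neg C => msize C
  | .conj C D => msize C + msize D + 1
  | .disj C D => msize C + msize D + 1
  | .ex _ C => msize C + 1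
  | .all _ C => msize C + 1

lemma msize_nnfNeg (C : Concept) : msize (nnfNeg C) = msize C := by
  induction C <;> simp [nnfNeg, msize, *]

lemma msize_pos (C : Concept) : 0 < msize C := by
  induction C <;> simp [msize] <;> omega

lemma Interp.mem_role_dom {α} (I : Interp α) {R : Role} {p : α × α}
    (h : p ∈ I.role R) : p.1 ∈ I.dom ∧ p.2 ∈ I.dom := by
  cases R with
  | name r => exact I.rname_sub r p h
  | inv r => exact (I.rname_sub r _ h).symm

lemma Interp.sem_sub_dom {α} (I : Interp α) (C : Concept) : I.sem C ⊆ I.dom := by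
  induction C with
  | atom A => exact I.cname_sub A
  | neg C ih => exact Set.diff_subset
  | conj C D ihC ihD => exact Set.inter_subset_left.trans ihC
  | disj C D ihC ihD => exact Set.union_subset ihC ihD
  | ex R C ih => exact fun d hd => hd.1
  | all R C ih => exact fun d hd => hd.1

lemma Interp.sem_top_eq {α} (I : Interp α) : I.sem Concept.top = I.dom := by
  apply Set.Subset.antisymm (I.sem_sub_dom _)
  intro d hd
  by_cases h : d ∈ I.cname 0
  · exact Or.inl h
  · exact Or.inr ⟨hd, h⟩

lemma Interp.sem_bot_eq {α} (I : Interp α) : I.sem Concept.bot = ∅ := by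
  show I.dom \ I.sem Concept.top = ∅
  rw [I.sem_top_eq]; simp

lemma mem_sem_bigDisj {α} (I : Interp α) (l : List Concept) (d : α) :
    d ∈ I.sem (bigDisj l) ↔ ∃ D ∈ l, d ∈ I.sem D := by
  induction l with
  | nil => simp [bigDisj, I.sem_bot_eq]
  | cons C l ih =>
      show d ∈ I.sem C ∪ I.sem (bigDisj l) ↔ _
      simp only [List.mem_cons, Set.mem_union]
      constructor
      · rintro (h | h)
        · exact ⟨C, Or.inl rfl, h⟩
        · obtain ⟨D, hD, h⟩ := ih.1 h; exact ⟨D, Or.inr hD, h⟩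
      · rintro ⟨D, (rfl | hD), h⟩
        · exact Or.inl h
        · exact Or.inr (ih.2 ⟨D, hD, h⟩)

lemma mem_sem_bigConj {α} (I : Interp α) (l : List Concept) (d : α)
    (h : d ∈ I.sem (bigConj l)) : ∀ D ∈ l, d ∈ I.sem D := by
  induction l with
  | nil => simp
  | cons C l ih =>
      intro D hD
      obtain ⟨h1, h2⟩ : d ∈ I.sem C ∩ I.sem (bigConj l) := h
      rcases List.mem_cons.1 hD with rfl | hD
      · exact h1
      · exact ih h2 D hD

/-- For NNF concepts, `nnfNeg` is semantic complement relative to the domain. -/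
lemma sem_nnfNeg {α} (I : Interp α) : ∀ C : Concept, C.IsNNF →
    I.sem (nnfNeg C) = I.dom \ I.sem C := by
  intro C
  induction C with
  | atom A => intro _; rfl
  | neg C ih =>
      rintro ⟨A, rfl⟩
      show I.sem (Concept.atom A) = I.dom \ (I.dom \ I.cname A)
      rw [Set.diff_diff_right, Set.diff_self, Set.empty_union,
        Set.inter_eq_self_of_subset_right (I.cname_sub A)]
      rfl
  | conj C D ihC ihD =>
      rintro ⟨hC, hD⟩
      show I.sem (nnfNeg C) ∪ I.sem (nnfNeg D) = I.dom \ (I.sem C ∩ I.sem D)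
      rw [ihC hC, ihD hD, Set.diff_inter]
  | disj C D ihC ihD =>
      rintro ⟨hC, hD⟩
      show I.sem (nnfNeg C) ∩ I.sem (nnfNeg D) = I.dom \ (I.sem C ∪ I.sem D)
      rw [ihC hC, ihD hD]
      ext x; simp only [Set.mem_inter_iff, Set.mem_diff, Set.mem_union]; tauto
  | ex R C ih =>
      intro hC
      ext x
      show (x ∈ I.dom ∧ ∀ e, (x, e) ∈ I.role R → e ∈ I.sem (nnfNeg C)) ↔ _
      rw [ih hC]
      simp only [Set.mem_diff, Set.mem_setOf_eq, Interp.sem]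
      constructor
      · rintro ⟨hx, h⟩
        refine ⟨hx, fun hex => ?_⟩
        obtain ⟨_, e, he, heC⟩ := hex
        exact (h e he).2 heC
      · rintro ⟨hx, h⟩
        refine ⟨hx, fun e he => ⟨(I.mem_role_dom he).2, fun heC => h ⟨hx, e, he, heC⟩⟩⟩
  | all R C ih =>
      intro hC
      ext x
      show (x ∈ I.dom ∧ ∃ e, (x, e) ∈ I.role R ∧ e ∈ I.sem (nnfNeg C)) ↔ _
      rw [ih hC]
      simp only [Set.mem_diff, Set.mem_setOf_eq, Interp.sem]
      constructor
      · rintro ⟨hx, e, he, hd, heC⟩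
        exact ⟨hx, fun hall => heC (hall.2 e he)⟩
      · rintro ⟨hx, h⟩
        by_contra hcon
        push_neg at hcon
        refine h ⟨hx, fun e he => ?_⟩
        have := hcon hx e he (I.mem_role_dom he).2
        tauto

lemma nnfNeg_isNNF : ∀ C : Concept, C.IsNNF → (nnfNeg C).IsNNF := by
  intro C
  induction C with
  | atom A => intro _; exact ⟨A, rfl⟩
  | neg C ih => rintro ⟨A, rfl⟩; exact trivial
  | conj C D ihC ihD => rintro ⟨h1, h2⟩; exact ⟨ihC h1, ihD h2⟩
  | disj C D ihC ihD => rintro ⟨h1, h2⟩; exact ⟨ihC h1, ihD h2⟩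
  | ex R C ih => exact ih
  | all R C ih => exact ih

lemma nnfNeg_isALC : ∀ C : Concept, C.IsALC → (nnfNeg C).IsALC := by
  intro C
  induction C with
  | atom A => intro _; exact trivial
  | neg C ih => exact fun h => h
  | conj C D ihC ihD => rintro ⟨h1, h2⟩; exact ⟨ihC h1, ihD h2⟩
  | disj C D ihC ihD => rintro ⟨h1, h2⟩; exact ⟨ihC h1, ihD h2⟩
  | ex R C ih => rintro ⟨h1, h2⟩; exact ⟨h1, ih h2⟩
  | all R C ih => rintro ⟨h1, h2⟩; exact ⟨h1, ih h2⟩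

lemma nnfNeg_rnames : ∀ C : Concept, (nnfNeg C).rnames = C.rnames := by
  intro C
  induction C <;> simp [nnfNeg, Concept.rnames, *]

/-- Every member of the closure is an NNF ALC concept over role name 0. -/
lemma cl_props {O : List (Concept × Concept)} {q : CQ} {cl : List Concept}
    (hwf : SymWf O q) (hcl : IsClosure O q cl) :
    ∀ C ∈ cl, C.IsNNF ∧ C.IsALC ∧ ∀ rn ∈ C.rnames, rn = 0 := by
  apply hcl.2
  refine ⟨?_, ?_, ?_, ?_⟩
  · intro p hp
    obtain ⟨h1, h2, h3, h4⟩ := hwf.1 p hp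
    refine ⟨⟨h3, h1, ?_⟩, ⟨h4, h2, ?_⟩⟩ <;>
      · intro rn hrn
        apply hwf.2.1 rn
        simp only [plainRnames, List.mem_flatMap]
        exact ⟨p, hp, by simp [hrn]⟩
  · intro p hp
    obtain ⟨h1, h2⟩ := hwf.2.2.2.2 p hp
    refine ⟨h2, h1, fun rn hrn => hwf.2.2.2.1 rn ?_⟩
    simp only [CQ.rnames, List.mem_append, List.mem_flatMap]
    exact Or.inl ⟨p, hp, hrn⟩
  · rintro C ⟨h1, h2, h3⟩
    exact ⟨nnfNeg_isNNF C h1, nnfNeg_isALC C h2, by rw [nnfNeg_rnames]; exact h3⟩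
  · rintro C ⟨h1, h2, h3⟩ C' hC'
    cases C with
    | atom A => simp [dirSub] at hC'
    | neg C =>
        obtain ⟨A, rfl⟩ := h1
        simp only [dirSub, List.mem_singleton] at hC'
        subst hC'
        exact ⟨trivial, trivial, by simp [Concept.rnames]⟩
    | conj C D =>
        simp only [dirSub, List.mem_cons, List.mem_singleton] at hC'
        rcases hC' with rfl | rfl | h
        · exact ⟨h1.1, h2.1, fun rn hrn => h3 rn (by simp [Concept.rnames, hrn])⟩
        · exact ⟨h1.2, h2.2, fun rn hrn => h3 rn (by simp [Concept.rnames, hrn])⟩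
        · simp at h
    | disj C D =>
        simp only [dirSub, List.mem_cons, List.mem_singleton] at hC'
        rcases hC' with rfl | rfl | h
        · exact ⟨h1.1, h2.1, fun rn hrn => h3 rn (by simp [Concept.rnames, hrn])⟩
        · exact ⟨h1.2, h2.2, fun rn hrn => h3 rn (by simp [Concept.rnames, hrn])⟩
        · simp at h
    | ex R C =>
        simp only [dirSub, List.mem_singleton] at hC'
        subst hC'
        exact ⟨h1, h2.2, fun rn hrn => h3 rn (by simp [Concept.rnames, hrn])⟩
    | all R C =>
        simp only [dirSub, List.mem_singleton] at hC'
        subst hC'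
        exact ⟨h1, h2.2, fun rn hrn => h3 rn (by simp [Concept.rnames, hrn])⟩

variable (O : List (Concept × Concept)) (q : CQ) (cl exl : List Concept) (L L' : ℕ)

lemma symOnt_ax1a (B : ℕ) (h : Concept.atom B ∈ cl) :
    Stmt.ci L (.atom (symAC O q (.atom B))) (.atom B) ∈ symOnt O q cl exl L L' := by
  unfold symOnt
  simp only [List.mem_append, List.mem_flatMap]
  refine Or.inl (Or.inl (Or.inl (Or.inl (Or.inl (Or.inl (Or.inl (Or.inl (Or.inl (Or.inl (Or.inl (Or.inl (?_))))))))))))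
  exact ⟨.atom B, h, by simp⟩

lemma symOnt_ax1b (B : ℕ) (h : Concept.atom B ∈ cl) :
    Stmt.ci L (.atom B) (.atom (symAC O q (.atom B))) ∈ symOnt O q cl exl L L' := by
  unfold symOnt
  simp only [List.mem_append, List.mem_flatMap]
  refine Or.inl (Or.inl (Or.inl (Or.inl (Or.inl (Or.inl (Or.inl (Or.inl (Or.inl (Or.inl (Or.inl (Or.inl (?_))))))))))))
  exact ⟨.atom B, h, by simp⟩

lemma symOnt_ax2a (C : Concept) (h : C ∈ cl) :
    Stmt.ci L (.atom (symAC O q (nnfNeg C))) (.neg (.atom (symAC O q C))) ∈ symOnt O q cl exl L L' := by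
  unfold symOnt
  simp only [List.mem_append, List.mem_flatMap]
  refine Or.inl (Or.inl (Or.inl (Or.inl (Or.inl (Or.inl (Or.inl (Or.inl (Or.inl (Or.inl (Or.inl (Or.inr (?_))))))))))))
  exact ⟨C, h, by simp⟩

lemma symOnt_ax2b (C : Concept) (h : C ∈ cl) :
    Stmt.ci L (.neg (.atom (symAC O q C))) (.atom (symAC O q (nnfNeg C))) ∈ symOnt O q cl exl L L' := by
  unfold symOnt
  simp only [List.mem_append, List.mem_flatMap]
  refine Or.inl (Or.inl (Or.inl (Or.inl (Or.inl (Or.inl (Or.inl (Or.inl (Or.inl (Or.inl (Or.inl (Or.inr (?_))))))))))))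
  exact ⟨C, h, by simp⟩

lemma symOnt_ax3a (C1 C2 : Concept) (h : Concept.conj C1 C2 ∈ cl) :
    Stmt.ci L (.atom (symAC O q (.conj C1 C2))) (.conj (.atom (symAC O q C1)) (.atom (symAC O q C2))) ∈ symOnt O q cl exl L L' := by
  unfold symOnt
  simp only [List.mem_append, List.mem_flatMap]
  refine Or.inl (Or.inl (Or.inl (Or.inl (Or.inl (Or.inl (Or.inl (Or.inl (Or.inl (Or.inl (Or.inr (?_)))))))))))
  exact ⟨.conj C1 C2, h, by simp⟩

lemma symOnt_ax3b (C1 C2 : Concept) (h : Concept.conj C1 C2 ∈ cl) :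
    Stmt.ci L (.conj (.atom (symAC O q C1)) (.atom (symAC O q C2))) (.atom (symAC O q (.conj C1 C2))) ∈ symOnt O q cl exl L L' := by
  unfold symOnt
  simp only [List.mem_append, List.mem_flatMap]
  refine Or.inl (Or.inl (Or.inl (Or.inl (Or.inl (Or.inl (Or.inl (Or.inl (Or.inl (Or.inl (Or.inr (?_)))))))))))
  exact ⟨.conj C1 C2, h, by simp⟩

lemma symOnt_ax4a (C1 C2 : Concept) (h : Concept.disj C1 C2 ∈ cl) :
    Stmt.ci L (.atom (symAC O q (.disj C1 C2))) (.disj (.atom (symAC O q C1)) (.atom (symAC O q C2))) ∈ symOnt O q cl exl L L' := by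
  unfold symOnt
  simp only [List.mem_append, List.mem_flatMap]
  refine Or.inl (Or.inl (Or.inl (Or.inl (Or.inl (Or.inl (Or.inl (Or.inl (Or.inl (Or.inl (Or.inr (?_)))))))))))
  exact ⟨.disj C1 C2, h, by simp⟩

lemma symOnt_ax4b (C1 C2 : Concept) (h : Concept.disj C1 C2 ∈ cl) :
    Stmt.ci L (.disj (.atom (symAC O q C1)) (.atom (symAC O q C2))) (.atom (symAC O q (.disj C1 C2))) ∈ symOnt O q cl exl L L' := by
  unfold symOnt
  simp only [List.mem_append, List.mem_flatMap]
  refine Or.inl (Or.inl (Or.inl (Or.inl (Or.inl (Or.inl (Or.inl (Or.inl (Or.inl (Or.inl (Or.inr (?_)))))))))))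
  exact ⟨.disj C1 C2, h, by simp⟩

lemma symOnt_ax6 (i : ℕ) (hi : i = 0 ∨ i = 1) :
    Stmt.ci L (.atom (symE O q i)) (bigDisj ((List.range (exl.length + 1)).map fun j => Concept.atom (symN O q i j))) ∈ symOnt O q cl exl L L' := by
  unfold symOnt
  simp only [List.mem_append, List.mem_flatMap]
  refine Or.inl (Or.inl (Or.inl (Or.inl (Or.inl (Or.inl (Or.inl (Or.inl (Or.inr (?_)))))))))
  rcases hi with rfl | rfl <;> simp

lemma symOnt_ax7 (i j : ℕ) (hi : i = 0 ∨ i = 1) (hj : j < exl.length + 1) :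
    Stmt.ci L (.atom (symN O q i j))
      (bigConj ((List.range j).map fun k =>
        Concept.ex (Role.name symRhat) (Concept.atom (symM O q i j (k + 1))))) ∈ symOnt O q cl exl L L' := by
  unfold symOnt
  simp only [List.mem_append, List.mem_flatMap]
  refine Or.inl (Or.inl (Or.inl (Or.inl (Or.inl (Or.inl (Or.inl (Or.inr (?_))))))))
  rcases hi with rfl | rfl <;> simp
  · exact Or.inl ⟨j, by omega, rfl, rfl⟩
  · exact Or.inr ⟨j, by omega, rfl, rfl⟩

lemma symOnt_ax8 (i j k : ℕ) (hi : i = 0 ∨ i = 1) (hj : j < exl.length + 1) (hk : k < j) :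
    Stmt.ci L (.atom (symM O q i j (k + 1)))
        (.conj (.ex (Role.name symR) (.atom (symE O q 0)))
               (.ex (Role.name symR) (.atom (symE O q 1)))) ∈ symOnt O q cl exl L L' := by
  unfold symOnt
  simp only [List.mem_append, List.mem_flatMap]
  refine Or.inl (Or.inl (Or.inl (Or.inl (Or.inl (Or.inl (Or.inr (?_)))))))
  rcases hi with rfl | rfl <;> simp
  · exact Or.inl ⟨j, by omega, k, hk, rfl⟩
  · exact Or.inr ⟨j, by omega, k, hk, rfl⟩

lemma symOnt_ax9 (C : Concept) (h : Concept.ex (Role.name 0) C ∈ cl) (i j : ℕ) (hi : i = 0 ∨ i = 1) (hj : j < exl.length + 1) :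
    Stmt.ci L (.conj (.atom (symAC O q (.ex (Role.name 0) C))) (.atom (symN O q i j)))
              (.disj (.atom (symAC O q C))
                (bigDisj ((List.range j).map fun k =>
                  Concept.all (Role.name symRhat)
                    (implC (.atom (symM O q i j (k + 1)))
                      (Concept.all (Role.name symR)
                        (implC (.atom (symE O q (1 - i))) (.atom (symAC O q C)))))))) ∈ symOnt O q cl exl L L' := by
  unfold symOnt
  simp only [List.mem_append, List.mem_flatMap]
  refine Or.inl (Or.inl (Or.inl (Or.inl (Or.inl (Or.inr (?_))))))
  refine ⟨.ex (Role.name 0) C, h, ?_⟩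
  rcases hi with rfl | rfl <;> simp
  · exact Or.inl ⟨j, by omega, rfl, rfl⟩
  · exact Or.inr ⟨j, by omega, rfl, rfl⟩

lemma symOnt_ax10 (C : Concept) (h : Concept.all (Role.name 0) C ∈ cl) :
    Stmt.ci L (.atom (symAC O q (.all (Role.name 0) C))) (.atom (symAC O q C)) ∈ symOnt O q cl exl L L' := by
  unfold symOnt
  simp only [List.mem_append, List.mem_flatMap]
  refine Or.inl (Or.inl (Or.inl (Or.inl (Or.inr (?_)))))
  exact ⟨.all (Role.name 0) C, h, by simp⟩

lemma symOnt_ax11 (C : Concept) (h : Concept.all (Role.name 0) C ∈ cl) :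
    Stmt.ci L (.ex (Role.name symR) (.atom (symAC O q (.all (Role.name 0) C))))
             (.all (Role.name symR) (.atom (symAC O q C))) ∈ symOnt O q cl exl L L' := by
  unfold symOnt
  simp only [List.mem_append, List.mem_flatMap]
  refine Or.inl (Or.inl (Or.inl (Or.inl (Or.inr (?_)))))
  exact ⟨.all (Role.name 0) C, h, by simp⟩

lemma symOnt_ax12 (i j k : ℕ) (hi : i = 0 ∨ i = 1) (hj : j < exl.length + 1) (hk : k < j - 1) :
    Stmt.ci L (.atom (symM O q i j (k + 1)))
        (.ex (Role.name symRu) (.atom (symM O q i j (k + 2)))) ∈ symOnt O q cl exl L L' := by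
  unfold symOnt
  simp only [List.mem_append, List.mem_flatMap]
  refine Or.inl (Or.inl (Or.inl (Or.inr (?_))))
  rcases hi with rfl | rfl <;> simp
  · exact Or.inl ⟨j, by omega, k, hk, rfl, rfl⟩
  · exact Or.inr ⟨j, by omega, k, hk, rfl, rfl⟩

lemma symOnt_ax13 (i j : ℕ) (hi : i = 0 ∨ i = 1) (hj : 1 ≤ j) (hj2 : j ≤ exl.length) :
    Stmt.cabs L' Concept.top L (symCQ13 O q i j) ∈ symOnt O q cl exl L L' := by
  unfold symOnt
  simp only [List.mem_append, List.mem_flatMap]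
  refine Or.inl (Or.inl (Or.inr (?_)))
  rcases hi with rfl | rfl <;> simp
  · exact Or.inl ⟨j - 1, by omega, by congr 1; omega⟩
  · exact Or.inr ⟨j - 1, by omega, by congr 1; omega⟩

lemma symOnt_ax14 (i j k : ℕ) (hi : i = 0 ∨ i = 1) (hj : 1 ≤ j) (hj2 : j ≤ exl.length) (hk : 1 ≤ k) (hk2 : k ≤ j) :
    Stmt.cabs L' Concept.top L (symCQ14 O q i j k) ∈ symOnt O q cl exl L L' := by
  unfold symOnt
  simp only [List.mem_append, List.mem_flatMap]
  refine Or.inl (Or.inr (?_))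
  rcases hi with rfl | rfl <;> simp
  · exact Or.inl ⟨j - 1, by omega, k - 1, by omega, by congr 1 <;> omega⟩
  · exact Or.inr ⟨j - 1, by omega, k - 1, by omega, by congr 1 <;> omega⟩


lemma range_map_eq {β : Type*} {m : ℕ} {h1 h2 : ℕ → β}
    (he : (List.range m).map h1 = (List.range m).map h2) : ∀ v < m, h1 v = h2 v := by
  rw [List.map_eq_map_iff] at he
  exact fun v hv => he v (List.mem_range.2 hv)

lemma chain_exists {β : Type*} (P : ℕ → β → Prop) (R : β → β → Prop) (j : ℕ) (x1 : β)
    (h1 : P 1 x1)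
    (step : ∀ l x, 1 ≤ l → l < j → P l x → ∃ y, R x y ∧ P (l + 1) y) :
    ∃ g : ℕ → β, g 1 = x1 ∧ (∀ l, 1 ≤ l → l ≤ j → P l (g l)) ∧
      (∀ l, 1 ≤ l → l < j → R (g l) (g (l + 1))) := by
  classical
  have hstep : ∀ l (x : β), ∃ y, 1 ≤ l → l < j → P l x → R x y ∧ P (l + 1) y := by
    intro l x
    by_cases h : 1 ≤ l ∧ l < j ∧ P l x
    · obtain ⟨y, hy⟩ := step l x h.1 h.2.1 h.2.2
      exact ⟨y, fun _ _ _ => hy⟩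
    · exact ⟨x, fun ha hb hc => absurd ⟨ha, hb, hc⟩ h⟩
  choose f hf using hstep
  let g : ℕ → β := fun l => Nat.rec x1 (fun m y => f (m + 1) y) (l - 1)
  have hg1 : g 1 = x1 := rfl
  have hgs : ∀ l, 1 ≤ l → g (l + 1) = f l (g l) := by
    intro l hl
    show (Nat.rec x1 (fun m y => f (m + 1) y) (l + 1 - 1) : β) = _
    have e : l + 1 - 1 = (l - 1) + 1 := by omega
    rw [e]
    show f ((l - 1) + 1) _ = _
    have e2 : (l - 1) + 1 = l := by omega
    rw [e2]
  have main : ∀ l, 1 ≤ l → l ≤ j → P l (g l) := by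
    intro l
    induction l with
    | zero => omega
    | succ m ihm =>
        intro _ hlj
        rcases Nat.lt_or_ge 0 m with hm | hm
        · have hPm := ihm hm (by omega)
          have := hf m (g m) hm (by omega) hPm
          rw [hgs m hm]
          exact this.2
        · have : m = 0 := by omega
          subst this
          exact hg1 ▸ h1
  refine ⟨g, hg1, main, ?_⟩
  intro l h1l hlj
  have := hf l (g l) h1l hlj (main l h1l (le_of_lt hlj))
  rw [hgs l h1l]
  exact this.1

lemma hom_symCQ13 {β : Type} (JL : Interp β) (O : List (Concept × Concept)) (Q : CQ)
    (i j : ℕ) (h : ℕ → β)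
    (h0 : h 0 ∈ JL.cname (symN O Q i j))
    (hM : ∀ k < j, h (k + 1) ∈ JL.cname (symM O Q i j (k + 1)))
    (hr : ∀ k < j, (h 0, h (k + 1)) ∈ JL.rname symRhat) :
    (symCQ13 O Q i j).Hom JL h := by
  have hdom : ∀ v < j + 1, h v ∈ JL.dom := by
    intro v hv
    cases v with
    | zero => exact JL.cname_sub _ h0
    | succ k => exact JL.cname_sub _ (hM k (by omega))
  refine ⟨?_, ?_, ?_⟩
  · intro v hv
    apply hdom
    simp only [symCQ13, CQ.vars, CQ.atomVars, List.mem_append, List.mem_map, List.mem_range,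
      List.mem_flatMap, List.mem_cons, List.map_cons, List.map_map] at hv
    rcases hv with hv | hv | hv
    · omega
    · rcases hv with rfl | ⟨a, ha, rfl⟩
      · omega
      · show a + 1 < j + 1
        omega
    · obtain ⟨p, ⟨kk, hkk, rfl⟩, hv⟩ := hv
      simp only [List.mem_cons, List.not_mem_nil, or_false] at hv
      rcases hv with rfl | rfl <;> omega
  · intro p hp
    simp only [symCQ13, List.mem_cons, List.mem_map, List.mem_range] at hp
    rcases hp with rfl | ⟨k, hk, rfl⟩
    · exact h0
    · exact hM k hk
  · intro p hp
    simp only [symCQ13, List.mem_map, List.mem_range] at hp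
    obtain ⟨k, hk, rfl⟩ := hp
    exact hr k hk

lemma hom_symCQ14 {β : Type} (JL : Interp β) (O : List (Concept × Concept)) (Q : CQ)
    (i j k : ℕ) (h : ℕ → β) (hk1 : 1 ≤ k) (hk2 : k ≤ j)
    (h0 : h 0 ∈ JL.cname (symE O Q i))
    (hM : ∀ l < j, h (l + 1) ∈ JL.cname (symM O Q i j (l + 1)))
    (hrk : (h k, h 0) ∈ JL.rname symR)
    (hu : ∀ l, l + 1 < j → (h (l + 1), h (l + 2)) ∈ JL.rname symRu) :
    (symCQ14 O Q i j k).Hom JL h := by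
  have hdom : ∀ v < j + 1, h v ∈ JL.dom := by
    intro v hv
    cases v with
    | zero => exact JL.cname_sub _ h0
    | succ l => exact JL.cname_sub _ (hM l (by omega))
  refine ⟨?_, ?_, ?_⟩
  · intro v hv
    apply hdom
    simp only [symCQ14, CQ.vars, CQ.atomVars, List.mem_append, List.mem_map, List.mem_range,
      List.mem_flatMap, List.mem_cons, List.map_cons, List.map_map] at hv
    rcases hv with hv | hv | hv
    · omega
    · rcases hv with rfl | ⟨a, ha, rfl⟩
      · omega
      · show a + 1 < j + 1
        omega
    · obtain ⟨p, (rfl | ⟨l, hl, rfl⟩), hv⟩ := hv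
      all_goals
        simp only [List.mem_cons, List.not_mem_nil, or_false] at hv
      · rcases hv with rfl | rfl <;> omega
      · rcases hv with rfl | rfl <;> omega
  · intro p hp
    simp only [symCQ14, List.mem_cons, List.mem_map, List.mem_range] at hp
    rcases hp with rfl | ⟨l, hl, rfl⟩
    · exact h0
    · exact hM l hl
  · intro p hp
    simp only [symCQ14, List.mem_cons, List.mem_map, List.mem_range] at hp
    rcases hp with rfl | ⟨l, hl, rfl⟩
    · exact hrk
    · exact hu l (by omega)

/-- Let `O, q, O'` be as in the `ALC^sym`-to-`ALC^abs[ca]`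
construction, and let `J` be a model of `O'`.  Define the interpretation `I`
by: `Δ^I = (E⁰ ⊔ E¹)^{J_L}`; `s^I` consists of all pairs `(d,d)` with
`d ∈ Δ^I` and all pairs `(d,d')` of elements of `Δ^I` such that there is
`e ∈ Δ^{J_L}` with `(e,d) ∈ r^{J_L}` and `(e,d') ∈ r^{J_L}`; and
`A^I = A^{J_L} ∩ Δ^I` for all concept names `A` (no role name other than `s`
is interpreted).  Then for every element `d ∈ (E⁰ ⊔ E¹)^{J_L}` and every
`ALC^sym` concept `C ∈ cl(O)`: `d ∈ (A_C)^{J_L}` if and only if `d ∈ C^I`. -/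
theorem alc_sym_truth_lemma
    (O : List (Concept × Concept)) (q : CQ) (cl exl : List Concept)
    (L L' : ℕ) (hLL' : L ≠ L')
    (hwf : SymWf O q)
    (hcl : IsClosure O q cl) (hexl : IsExList cl exl)
    (α : Type) (J : AInterp α) (hval : J.IsValid)
    (hmod : ∀ s ∈ symOnt O q cl exl L L', J.sat s)
    (I : Interp α)
    (hdom : I.dom = (J.interp L).sem
      (Concept.disj (Concept.atom (symE O q 0)) (Concept.atom (symE O q 1))))
    (hcn : ∀ A, I.cname A = (J.interp L).cname A ∩ I.dom)
    (hs : I.rname 0 =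
      {p | p.1 ∈ I.dom ∧ p.2 = p.1} ∪
      {p | p.1 ∈ I.dom ∧ p.2 ∈ I.dom ∧
        ∃ e, (e, p.1) ∈ (J.interp L).rname symR ∧
             (e, p.2) ∈ (J.interp L).rname symR})
    (hrn : ∀ rn, rn ≠ 0 → I.rname rn = ∅) :
    ∀ d ∈ (J.interp L).sem
        (Concept.disj (Concept.atom (symE O q 0)) (Concept.atom (symE O q 1))),
      ∀ C ∈ cl, (d ∈ (J.interp L).cname (symAC O q C) ↔ d ∈ I.sem C) := by
  classical
  have props := cl_props hwf hcl
  obtain ⟨hclO, hclq, hclneg, hclsub⟩ := hcl.1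
  have hWfu : ∀ (a a' : α) (t t' : List α), J.rho a L = some t → J.rho a' L = some t' →
      ∀ e, e ∈ t → e ∈ t' → t = t' := by
    intro a a' t t' h1 h2 e he he'
    have hu := hval.1.2.2.2.2.2 L a a' t t' h1 h2 e he he'
    subst hu
    rw [h1] at h2
    exact Option.some.inj h2
  have hci : ∀ {C D : Concept}, Stmt.ci L C D ∈ symOnt O q cl exl L L' →
      (J.interp L).sem C ⊆ (J.interp L).sem D := fun h => (hmod _ h).2
  have hEdom : ∀ x, x ∈ (J.interp L).sem
      (Concept.disj (Concept.atom (symE O q 0)) (Concept.atom (symE O q 1))) →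
      x ∈ (J.interp L).dom := fun x hx => (J.interp L).sem_sub_dom _ hx
  -- the forward direction for existential restrictions
  have exFwd : ∀ C : Concept, Concept.ex (Role.name 0) C ∈ cl →
      (∀ e, e ∈ (J.interp L).sem
          (Concept.disj (Concept.atom (symE O q 0)) (Concept.atom (symE O q 1))) →
        (e ∈ (J.interp L).cname (symAC O q C) ↔ e ∈ I.sem C)) →
      ∀ d, d ∈ (J.interp L).sem
          (Concept.disj (Concept.atom (symE O q 0)) (Concept.atom (symE O q 1))) →
        d ∈ (J.interp L).cname (symAC O q (Concept.ex (Role.name 0) C)) →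
        d ∈ I.sem (Concept.ex (Role.name 0) C) := by
    intro C hCex ihC d hd hdA
    have hdI : d ∈ I.dom := by rw [hdom]; exact hd
    obtain ⟨i, hi01, hdEi⟩ : ∃ i, (i = 0 ∨ i = 1) ∧ d ∈ (J.interp L).cname (symE O q i) := by
      rcases hd with h | h
      · exact ⟨0, Or.inl rfl, h⟩
      · exact ⟨1, Or.inr rfl, h⟩
    have h6 := hci (symOnt_ax6 O q cl exl L L' i hi01) hdEi
    rw [mem_sem_bigDisj] at h6
    obtain ⟨D, hD, hdD⟩ := h6
    simp only [List.mem_map, List.mem_range] at hD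
    obtain ⟨j, hj, rfl⟩ := hD
    have h9 := hci (symOnt_ax9 O q cl exl L L' C hCex i j hi01 hj) ⟨hdA, hdD⟩
    rcases h9 with hAc | hdisj
    · refine ⟨hdI, d, ?_, (ihC d hd).1 hAc⟩
      show (d, d) ∈ I.rname 0
      rw [hs]
      exact Or.inl ⟨hdI, rfl⟩
    · rw [mem_sem_bigDisj] at hdisj
      obtain ⟨D, hD, hdDk⟩ := hdisj
      simp only [List.mem_map, List.mem_range] at hD
      obtain ⟨k', hk', rfl⟩ := hD
      have hj1 : 1 ≤ j := by omega
      -- witnesses from axiom (7)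
      have h7 := hci (symOnt_ax7 O q cl exl L L' i j hi01 hj) hdD
      have h7' : ∀ l, ∃ y : α, l < j → ((d, y) ∈ (J.interp L).rname symRhat ∧
          y ∈ (J.interp L).cname (symM O q i j (l + 1))) := by
        intro l
        by_cases hl : l < j
        · have hmem := mem_sem_bigConj _ _ _ h7
            (Concept.ex (Role.name symRhat) (Concept.atom (symM O q i j (l + 1))))
            (by simp only [List.mem_map, List.mem_range]; exact ⟨l, hl, rfl⟩)
          obtain ⟨_, y, hy1, hy2⟩ := hmem
          exact ⟨y, fun _ => ⟨hy1, hy2⟩⟩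
        · exact ⟨d, fun h => absurd h hl⟩
      choose f0 hf0 using h7'
      set F : ℕ → α := fun l => f0 (l - 1) with hF
      have hFM : ∀ l, 1 ≤ l → l ≤ j → F l ∈ (J.interp L).cname (symM O q i j l) := by
        intro l h1 h2
        have := (hf0 (l - 1) (by omega)).2
        have e : l - 1 + 1 = l := by omega
        rw [e] at this
        exact this
      have hFr : ∀ l, 1 ≤ l → l ≤ j → (d, F l) ∈ (J.interp L).rname symRhat := by
        intro l h1 h2
        exact (hf0 (l - 1) (by omega)).1
      -- axiom (8)
      have h8 : ∀ l, 1 ≤ l → l ≤ j → ∀ x : α, x ∈ (J.interp L).cname (symM O q i j l) →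
          (∃ y, (x, y) ∈ (J.interp L).rname symR ∧ y ∈ (J.interp L).cname (symE O q 0)) ∧
          (∃ y, (x, y) ∈ (J.interp L).rname symR ∧ y ∈ (J.interp L).cname (symE O q 1)) := by
        intro l h1 h2 x hx
        have hmem := symOnt_ax8 O q cl exl L L' i j (l - 1) hi01 hj (by omega)
        have hx' : x ∈ (J.interp L).sem (Concept.atom (symM O q i j (l - 1 + 1))) := by
          have e : l - 1 + 1 = l := by omega
          rw [e]
          exact hx
        obtain ⟨⟨_, y0, hy0, hy0'⟩, ⟨_, y1, hy1, hy1'⟩⟩ := hci hmem hx'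
        exact ⟨⟨y0, hy0, hy0'⟩, ⟨y1, hy1, hy1'⟩⟩
      -- chain from axiom (12)
      have hstep : ∀ l (x : α), 1 ≤ l → l < j →
          x ∈ (J.interp L).cname (symM O q i j l) →
          ∃ y, (x, y) ∈ (J.interp L).rname symRu ∧
            y ∈ (J.interp L).cname (symM O q i j (l + 1)) := by
        intro l x h1 h2 hx
        have hmem := symOnt_ax12 O q cl exl L L' i j (l - 1) hi01 hj (by omega)
        have hx' : x ∈ (J.interp L).sem (Concept.atom (symM O q i j (l - 1 + 1))) := by
          have e : l - 1 + 1 = l := by omega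
          rw [e]
          exact hx
        obtain ⟨_, y, hy, hy'⟩ := hci hmem hx'
        refine ⟨y, hy, ?_⟩
        have e : l - 1 + 2 = l + 1 := by omega
        rw [e] at hy'
        exact hy'
      obtain ⟨g, hg1, hgP, hgR⟩ := chain_exists
        (fun l y => y ∈ (J.interp L).cname (symM O q i j l))
        (fun x y => (x, y) ∈ (J.interp L).rname symRu) j (F 1)
        (hFM 1 le_rfl hj1) hstep
      -- ensemble (13)
      set h13 : ℕ → α := fun v => if v = 0 then d else F v with hh13
      have hom13 : (symCQ13 O q i j).Hom (J.interp L) h13 :=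
        hom_symCQ13 _ O q i j h13 (by simp only [hh13, ↓reduceIte]; exact hdD)
          (fun k hk => by simpa [hh13] using hFM (k + 1) (by omega) (by omega))
          (fun k hk => by simpa [hh13] using hFr (k + 1) (by omega) (by omega))
      have ht13 : (List.range (j + 1)).map h13 ∈ (symCQ13 O q i j).answers (J.interp L) :=
        ⟨h13, hom13, rfl⟩
      obtain ⟨a13, -, ha13⟩ :=
        (hmod _ (symOnt_ax13 O q cl exl L L' i j hi01 hj1 (by omega))).2 _ ht13
      -- ensemble (14) with k = 1 : establishes the u-chain on F
      obtain ⟨e0, he0r, he0E⟩ : ∃ y, (F 1, y) ∈ (J.interp L).rname symR ∧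
          y ∈ (J.interp L).cname (symE O q i) := by
        have h8' := h8 1 le_rfl hj1 (F 1) (hFM 1 le_rfl hj1)
        rcases hi01 with rfl | rfl
        · exact h8'.1
        · exact h8'.2
      set h14 : ℕ → α := fun v => if v = 0 then e0 else g v with hh14
      have hom14 : (symCQ14 O q i j 1).Hom (J.interp L) h14 :=
        hom_symCQ14 _ O q i j 1 h14 le_rfl hj1 (by simpa [hh14] using he0E)
          (fun l hl => by simpa [hh14] using hgP (l + 1) (by omega) (by omega))
          (by simpa [hh14, hg1] using he0r)
          (fun l hl => by simpa [hh14] using hgR (l + 1) (by omega) (by omega))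
      obtain ⟨a14, -, ha14⟩ :=
        (hmod _ (symOnt_ax14 O q cl exl L L' i j 1 hi01 hj1 (by omega) le_rfl hj1)).2 _
          ⟨h14, hom14, rfl⟩
      have hshared13 : F 1 ∈ (List.range (j + 1)).map h13 :=
        List.mem_map.2 ⟨1, List.mem_range.2 (by omega), by simp [hh13]⟩
      have hshared14 : F 1 ∈ (List.range (j + 1)).map h14 :=
        List.mem_map.2 ⟨1, List.mem_range.2 (by omega), by simp [hh14, hg1]⟩
      have heq := hWfu a13 a14 _ _ ha13 ha14 (F 1) hshared13 hshared14
      have hpt := range_map_eq heq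
      have hFg : ∀ v, 1 ≤ v → v ≤ j → F v = g v := by
        intro v h1 h2
        have := hpt v (by omega)
        simpa [hh13, hh14, Nat.pos_iff_ne_zero.1 h1] using this
      have hFu : ∀ l, l + 1 < j → (F (l + 1), F (l + 2)) ∈ (J.interp L).rname symRu := by
        intro l hl
        rw [hFg (l + 1) (by omega) (by omega), hFg (l + 2) (by omega) (by omega)]
        exact hgR (l + 1) (by omega) hl
      -- ensemble (14) with the k from axiom (9)
      obtain ⟨e1, he1r, he1E⟩ : ∃ y, (F (k' + 1), y) ∈ (J.interp L).rname symR ∧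
          y ∈ (J.interp L).cname (symE O q i) := by
        have h8' := h8 (k' + 1) (by omega) (by omega) (F (k' + 1)) (hFM (k' + 1) (by omega) (by omega))
        rcases hi01 with rfl | rfl
        · exact h8'.1
        · exact h8'.2
      set h14b : ℕ → α := fun v => if v = 0 then e1 else F v with hh14b
      have hom14b : (symCQ14 O q i j (k' + 1)).Hom (J.interp L) h14b :=
        hom_symCQ14 _ O q i j (k' + 1) h14b (by omega) (by omega)
          (by simpa [hh14b] using he1E)
          (fun l hl => by simpa [hh14b] using hFM (l + 1) (by omega) (by omega))
          (by simpa [hh14b] using he1r)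
          (fun l hl => by simpa [hh14b] using hFu l hl)
      obtain ⟨a14b, -, ha14b⟩ :=
        (hmod _ (symOnt_ax14 O q cl exl L L' i j (k' + 1) hi01 hj1 (by omega) (by omega)
          (by omega))).2 _ ⟨h14b, hom14b, rfl⟩
      have hshared14b : F 1 ∈ (List.range (j + 1)).map h14b :=
        List.mem_map.2 ⟨1, List.mem_range.2 (by omega), by simp [hh14b]⟩
      have heqb := hWfu a13 a14b _ _ ha13 ha14b (F 1) hshared13 hshared14b
      have hptb := range_map_eq heqb
      have hde1 : d = e1 := by simpa [hh13, hh14b] using hptb 0 (by omega)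
      have hrkd : (F (k' + 1), d) ∈ (J.interp L).rname symR := by
        rw [hde1]
        exact he1r
      -- the witness in E^{1-i}
      obtain ⟨e, her, heE⟩ : ∃ y, (F (k' + 1), y) ∈ (J.interp L).rname symR ∧
          y ∈ (J.interp L).cname (symE O q (1 - i)) := by
        have h8' := h8 (k' + 1) (by omega) (by omega) (F (k' + 1)) (hFM (k' + 1) (by omega) (by omega))
        rcases hi01 with rfl | rfl
        · exact h8'.2
        · exact h8'.1
      have heBigE : e ∈ (J.interp L).sem
          (Concept.disj (Concept.atom (symE O q 0)) (Concept.atom (symE O q 1))) := by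
        rcases hi01 with rfl | rfl
        · exact Or.inr heE
        · exact Or.inl heE
      -- apply the disjunct of axiom (9)
      have hstep1 := hdDk.2 (F (k' + 1)) (hFr (k' + 1) (by omega) (by omega))
      rcases hstep1 with h1 | h1
      · exact absurd (hFM (k' + 1) (by omega) (by omega)) h1.2
      · have h2 := h1.2 e her
        rcases h2 with h2 | h2
        · exact absurd heE h2.2
        · refine ⟨hdI, e, ?_, (ihC e heBigE).1 h2⟩
          show (d, e) ∈ I.rname 0
          rw [hs]
          refine Or.inr ⟨hdI, by rw [hdom]; exact heBigE, F (k' + 1), hrkd, her⟩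
  -- the forward direction for universal restrictions
  have allFwd : ∀ C : Concept, Concept.all (Role.name 0) C ∈ cl →
      (∀ e, e ∈ (J.interp L).sem
          (Concept.disj (Concept.atom (symE O q 0)) (Concept.atom (symE O q 1))) →
        (e ∈ (J.interp L).cname (symAC O q C) ↔ e ∈ I.sem C)) →
      ∀ d, d ∈ (J.interp L).sem
          (Concept.disj (Concept.atom (symE O q 0)) (Concept.atom (symE O q 1))) →
        d ∈ (J.interp L).cname (symAC O q (Concept.all (Role.name 0) C)) →
        d ∈ I.sem (Concept.all (Role.name 0) C) := by
    intro C hCall ihC d hd hdA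
    have hdI : d ∈ I.dom := by rw [hdom]; exact hd
    refine ⟨hdI, ?_⟩
    intro e he
    have he' : (d, e) ∈ I.rname 0 := he
    rw [hs] at he'
    rcases he' with ⟨-, heq⟩ | ⟨-, heI, w, hw1, hw2⟩
    · have heq' : e = d := heq
      subst heq'
      have h10 := hci (symOnt_ax10 O q cl exl L L' C hCall) hdA
      exact (ihC e hd).1 h10
    · have hwdom : w ∈ (J.interp L).dom := ((J.interp L).rname_sub symR _ hw1).1
      have h11 := hci (symOnt_ax11 O q cl exl L L' C hCall) ⟨hwdom, d, hw1, hdA⟩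
      have heA := h11.2 e hw2
      have heBig : e ∈ (J.interp L).sem
          (Concept.disj (Concept.atom (symE O q 0)) (Concept.atom (symE O q 1))) := by
        rw [← hdom]
        exact heI
      exact (ihC e heBig).1 heA
  -- main induction on the measure
  suffices H : ∀ N : ℕ, ∀ C ∈ cl, msize C ≤ N → ∀ d, d ∈ (J.interp L).sem
      (Concept.disj (Concept.atom (symE O q 0)) (Concept.atom (symE O q 1))) →
      (d ∈ (J.interp L).cname (symAC O q C) ↔ d ∈ I.sem C) by
    intro d hd C hC
    exact H (msize C) C hC le_rfl d hd
  intro N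
  induction N with
  | zero =>
      intro C _ hle
      have := msize_pos C
      omega
  | succ N ihN =>
      intro C hC hle d hd
      have hdI : d ∈ I.dom := by rw [hdom]; exact hd
      have hdJ : d ∈ (J.interp L).dom := hEdom d hd
      obtain ⟨hNNF, hALC, hR0⟩ := props C hC
      cases C with
      | atom B =>
          constructor
          · intro h
            have h1 := hci (symOnt_ax1a O q cl exl L L' B hC) h
            show d ∈ I.cname B
            rw [hcn]
            exact ⟨h1, hdI⟩
          · intro h
            have h' : d ∈ I.cname B := h
            rw [hcn] at h'
            exact hci (symOnt_ax1b O q cl exl L L' B hC) h'.1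
      | neg C0 =>
          obtain ⟨A, rfl⟩ := hNNF
          have hatom : Concept.atom A ∈ cl := hclsub _ hC _ (by simp [dirSub])
          constructor
          · intro h
            have h2 := hci (symOnt_ax2a O q cl exl L L' (Concept.atom A) hatom) h
            refine ⟨hdI, fun hB => ?_⟩
            have hB' : d ∈ I.cname A := hB
            rw [hcn] at hB'
            exact h2.2 (hci (symOnt_ax1b O q cl exl L L' A hatom) hB'.1)
          · intro h
            refine hci (symOnt_ax2b O q cl exl L L' (Concept.atom A) hatom) ⟨hdJ, fun hA => ?_⟩
            have hB := hci (symOnt_ax1a O q cl exl L L' A hatom) hA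
            have hBc : d ∈ I.cname A := by rw [hcn]; exact ⟨hB, hdI⟩
            exact h.2 hBc
      | conj C1 C2 =>
          have hm1 : C1 ∈ cl := hclsub _ hC _ (by simp [dirSub])
          have hm2 : C2 ∈ cl := hclsub _ hC _ (by simp [dirSub])
          have i1 := ihN C1 hm1 (by simp only [msize] at hle; omega) d hd
          have i2 := ihN C2 hm2 (by simp only [msize] at hle; omega) d hd
          constructor
          · intro h
            have h3 := hci (symOnt_ax3a O q cl exl L L' C1 C2 hC) h
            exact ⟨i1.1 h3.1, i2.1 h3.2⟩
          · rintro ⟨hA, hB⟩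
            exact hci (symOnt_ax3b O q cl exl L L' C1 C2 hC) ⟨i1.2 hA, i2.2 hB⟩
      | disj C1 C2 =>
          have hm1 : C1 ∈ cl := hclsub _ hC _ (by simp [dirSub])
          have hm2 : C2 ∈ cl := hclsub _ hC _ (by simp [dirSub])
          have i1 := ihN C1 hm1 (by simp only [msize] at hle; omega) d hd
          have i2 := ihN C2 hm2 (by simp only [msize] at hle; omega) d hd
          constructor
          · intro h
            have h3 := hci (symOnt_ax4a O q cl exl L L' C1 C2 hC) h
            rcases h3 with h3 | h3
            · exact Or.inl (i1.1 h3)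
            · exact Or.inr (i2.1 h3)
          · intro h
            refine hci (symOnt_ax4b O q cl exl L L' C1 C2 hC) ?_
            rcases h with h | h
            · exact Or.inl (i1.2 h)
            · exact Or.inr (i2.2 h)
      | ex R C0 =>
          have hRname : R = Role.name 0 := by
            cases R with
            | name r =>
                have := hR0 r (by simp [Concept.rnames, Role.base])
                subst this
                rfl
            | inv r => exact absurd hALC.1 (by simp [Role.IsName])
          subst hRname
          have hC0 : C0 ∈ cl := hclsub _ hC _ (by simp [dirSub])
          have hmle : msize C0 ≤ N := by simp only [msize] at hle; omega
          have ihC0 := fun e he => ihN C0 hC0 hmle e he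
          constructor
          · exact fun h => exFwd C0 hC ihC0 d hd h
          · intro h
            by_contra hnA
            have h2 := hci (symOnt_ax2b O q cl exl L L' (Concept.ex (Role.name 0) C0) hC)
              ⟨hdJ, hnA⟩
            have hallcl : Concept.all (Role.name 0) (nnfNeg C0) ∈ cl := hclneg _ hC
            have ihneg := fun e he => ihN (nnfNeg C0)
              (hclsub _ hallcl _ (by simp [dirSub]))
              (by rw [msize_nnfNeg]; exact hmle) e he
            have hall := allFwd (nnfNeg C0) hallcl ihneg d hd h2
            obtain ⟨-, e, hre, heC⟩ := h
            have hthis := hall.2 e hre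
            rw [sem_nnfNeg I C0 (props C0 hC0).1] at hthis
            exact hthis.2 heC
      | all R C0 =>
          have hRname : R = Role.name 0 := by
            cases R with
            | name r =>
                have := hR0 r (by simp [Concept.rnames, Role.base])
                subst this
                rfl
            | inv r => exact absurd hALC.1 (by simp [Role.IsName])
          subst hRname
          have hC0 : C0 ∈ cl := hclsub _ hC _ (by simp [dirSub])
          have hmle : msize C0 ≤ N := by simp only [msize] at hle; omega
          have ihC0 := fun e he => ihN C0 hC0 hmle e he
          constructor
          · exact fun h => allFwd C0 hC ihC0 d hd h
          · intro h
            by_contra hnA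
            have h2 := hci (symOnt_ax2b O q cl exl L L' (Concept.all (Role.name 0) C0) hC)
              ⟨hdJ, hnA⟩
            have hexcl : Concept.ex (Role.name 0) (nnfNeg C0) ∈ cl := hclneg _ hC
            have ihneg := fun e he => ihN (nnfNeg C0)
              (hclsub _ hexcl _ (by simp [dirSub]))
              (by rw [msize_nnfNeg]; exact hmle) e he
            have hex := exFwd (nnfNeg C0) hexcl ihneg d hd h2
            obtain ⟨-, e, hre, heC⟩ := hex
            rw [sem_nnfNeg I C0 hNNF] at heC
            exact heC.2 (h.2 e hre)


end DLAbs
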